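/- arXiv:2112.08638 — 4 statements merged into one kernel-verified Lean document; each statement's English description precedes it below -/
import Mathlib

section
/- If for some query node q of Q the set {v ∈ V_G : (q,v) ∈ FB} is empty, where FB is the double simulation of Q by G, then there exists no homomorphism from Q to G (the answer of Q on G is empty). -/
/-- A binary relation `S` between the nodes of a hybrid graph pattern query
and the nodes of a data graph satisfies the double-simulation conditions. -/
def DSim {VQ VG L : Type*} (Ed Er : VQ → VQ → Prop) (labQ : VQ → L)
    (E : VG → VG → Prop) (labG : VG → L) (S : VQ → VG → Prop) : Prop :=
  ∀ q v, S q v →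
    labQ q = labG v ∧
    (∀ q', Ed q q' → ∃ v', S q' v' ∧ E v v') ∧
    (∀ q', Er q q' → ∃ v', S q' v' ∧ Relation.TransGen E v v') ∧
    (∀ q', Ed q' q → ∃ v', S q' v' ∧ E v' v) ∧
    (∀ q', Er q' q → ∃ v', S q' v' ∧ Relation.TransGen E v' v)

/-- `h` is a homomorphism from the hybrid graph pattern query `Q` to the
data graph `G`. -/
def IsHom {VQ VG L : Type*} (Ed Er : VQ → VQ → Prop) (labQ : VQ → L)
    (E : VG → VG → Prop) (labG : VG → L) (h : VQ → VG) : Prop :=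
  (∀ q, labQ q = labG (h q)) ∧
  (∀ p q, Ed p q → E (h p) (h q)) ∧
  (∀ p q, Er p q → Relation.TransGen E (h p) (h q))

theorem IsHom.dsim_graph {VQ VG L : Type*} {Ed Er : VQ → VQ → Prop} {labQ : VQ → L}
    {E : VG → VG → Prop} {labG : VG → L} {h : VQ → VG} (hh : IsHom Ed Er labQ E labG h) :
    DSim Ed Er labQ E labG (fun q v => v = h q) := by
  obtain ⟨hlab, hdirect, hreach⟩ := hh
  rintro q _ rfl
  exact ⟨hlab q,
    fun q' hq' => ⟨h q', rfl, hdirect _ _ hq'⟩,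
    fun q' hq' => ⟨h q', rfl, hreach _ _ hq'⟩,
    fun q' hq' => ⟨h q', rfl, hdirect _ _ hq'⟩,
    fun q' hq' => ⟨h q', rfl, hreach _ _ hq'⟩⟩

/-- If for some query node `q` the set of data nodes paired with `q` in the
double simulation `FB` (the union of all relations satisfying the
double-simulation conditions) is empty, then there is no homomorphism from
`Q` to `G` (the answer of `Q` on `G` is empty). -/
theorem empty_dsim_no_hom {VQ VG L : Type*} (Ed Er : VQ → VQ → Prop)
    (labQ : VQ → L) (E : VG → VG → Prop) (labG : VG → L)
    (hempty : ∃ q : VQ, ∀ v : VG, ¬ ∃ S, DSim Ed Er labQ E labG S ∧ S q v) :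
    ¬ ∃ h : VQ → VG, IsHom Ed Er labQ E labG h := by
  rintro ⟨h, hh⟩
  obtain ⟨q, hq⟩ := hempty
  exact hq (h q) ⟨_, hh.dsim_graph, rfl⟩
end

section
/- AGM bound for hybrid pattern queries: let G be a data graph with finite node set V_G and let x be a fractional edge cover of Q, assigning a real x_e > 0 to every edge e of Q such that for every query node q the sum of x_e over edges e incident to q is at least 1. Then the number of homomorphisms from Q to G is at most the product over all edges e of Q of |ms(e)|^{x_e}, where |ms(e)| is the cardinality of the match set of e. -/
/-!
A homomorphism is in particular a solution of the join of the binary relations `ms(e)`, so it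
suffices to bound that join (Atserias–Grohe–Marx, in Friedgut's weighted form). Induct on the
query nodes: fixing the value `b` of one node `v` splits the sum into slices, each bounded by
induction; summing the slice bounds over `b` is Hölder's inequality with exponents `x_e` for the
edges at `v`, whose total is at least `1` by the cover condition.
-/

open scoped Classical

/-- Match set of a direct query edge `(p, q)`. -/
def msD {VQ VG L : Type*} (labQ : VQ → L) (E : VG → VG → Prop) (labG : VG → L)
    (p q : VQ) : Set (VG × VG) :=
  {uv | labQ p = labG uv.1 ∧ labQ q = labG uv.2 ∧ E uv.1 uv.2}

/-- Match set of a reachability query edge `(p, q)`. -/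
def msR {VQ VG L : Type*} (labQ : VQ → L) (E : VG → VG → Prop) (labG : VG → L)
    (p q : VQ) : Set (VG × VG) :=
  {uv | labQ p = labG uv.1 ∧ labQ q = labG uv.2 ∧ Relation.TransGen E uv.1 uv.2}

open Finset

section Pinned

variable {α β : Type*} [Fintype α] [Fintype β]

/-- Stands in for the function space `s → β` without subtypes: coordinates outside `s` are
pinned to `f₀`. -/
noncomputable def pinnedOutside (f₀ : α → β) (s : Finset α) : Finset (α → β) :=
  univ.filter fun f => ∀ a ∉ s, f a = f₀ a

variable {f₀ : α → β} {s : Finset α}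

theorem mem_pinnedOutside {f : α → β} :
    f ∈ pinnedOutside f₀ s ↔ ∀ a ∉ s, f a = f₀ a := by
  simp [pinnedOutside]

theorem self_mem_pinnedOutside : f₀ ∈ pinnedOutside f₀ s :=
  mem_pinnedOutside.2 fun _ _ => rfl

theorem pinnedOutside_empty : pinnedOutside f₀ ∅ = {f₀} := by
  ext f
  simp [mem_pinnedOutside, funext_iff]

theorem pinnedOutside_univ : pinnedOutside f₀ univ = univ := by
  ext f
  simp [mem_pinnedOutside]

theorem sum_pinnedOutside_insert {M : Type*} [AddCommMonoid M] {v : α} (hv : v ∉ s)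
    (F : (α → β) → M) :
    ∑ f ∈ pinnedOutside f₀ (insert v s), F f =
      ∑ b, ∑ g ∈ pinnedOutside f₀ s, F (Function.update g v b) := by
  rw [← sum_product']
  refine sum_nbij' (fun f => (f v, Function.update f v (f₀ v)))
    (fun bg => Function.update bg.2 v bg.1) ?_ ?_ ?_ ?_ ?_
  · intro f hf
    simp only [mem_product, mem_univ, true_and, mem_pinnedOutside] at hf ⊢
    intro a ha
    rcases eq_or_ne a v with rfl | hav
    · simp
    · simp [hav, hf a (by simp [hav, ha])]
  · rintro ⟨b, g⟩ hg
    simp only [mem_product, mem_univ, true_and, mem_pinnedOutside] at hg ⊢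
    intro a ha
    rw [mem_insert, not_or] at ha
    simp [ha.1, hg a ha.2]
  · intro f _
    simp
  · rintro ⟨b, g⟩ hg
    simp only [mem_product, mem_univ, true_and, mem_pinnedOutside] at hg
    simp [← hg v hv]
  · intro f _
    simp

end Pinned

section Holder

variable {ι κ : Type*}

theorem prod_rpow_le_weighted_mean_of_le_one (T : Finset ι) {z x : ι → ℝ}
    (hz₀ : ∀ e ∈ T, 0 ≤ z e) (hz₁ : ∀ e ∈ T, z e ≤ 1) (hx : ∀ e ∈ T, 0 < x e)
    (hsum : 1 ≤ ∑ e ∈ T, x e) :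
    ∏ e ∈ T, z e ^ x e ≤ ∑ e ∈ T, x e / (∑ e' ∈ T, x e') * z e := by
  set σ := ∑ e ∈ T, x e
  have hσ : 0 < σ := one_pos.trans_le hsum
  calc ∏ e ∈ T, z e ^ x e
      ≤ ∏ e ∈ T, z e ^ (x e / σ) := by
        refine prod_le_prod (fun e he => by have := hz₀ e he; positivity) fun e he => ?_
        exact Real.rpow_le_rpow_of_exponent_ge' (hz₀ e he) (hz₁ e he)
          (div_pos (hx e he) hσ).le (div_le_self (hx e he).le hsum)
    _ ≤ ∑ e ∈ T, x e / σ * z e :=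
        Real.geom_mean_le_arith_mean_weighted T _ _
          (fun e he => (div_pos (hx e he) hσ).le) (by rw [← sum_div, div_self hσ.ne']) hz₀

theorem sum_prod_rpow_le_prod_sum_rpow (s : Finset κ) (T : Finset ι) {c : ι → κ → ℝ}
    {x : ι → ℝ} (hc : ∀ e ∈ T, ∀ a ∈ s, 0 ≤ c e a) (hx : ∀ e ∈ T, 0 < x e)
    (hsum : 1 ≤ ∑ e ∈ T, x e) :
    ∑ a ∈ s, ∏ e ∈ T, c e a ^ x e ≤ ∏ e ∈ T, (∑ a ∈ s, c e a) ^ x e := by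
  set C : ι → ℝ := fun e => ∑ a ∈ s, c e a
  have hC : ∀ e ∈ T, 0 ≤ C e := fun e he => sum_nonneg (hc e he)
  have hRHS : 0 ≤ ∏ e ∈ T, C e ^ x e := prod_nonneg fun e he => by have := hC e he; positivity
  by_cases hzero : ∃ e ∈ T, C e = 0
  · obtain ⟨e, he, hCe⟩ := hzero
    have hce : ∀ a ∈ s, c e a = 0 := (sum_eq_zero_iff_of_nonneg (hc e he)).1 hCe
    calc ∑ a ∈ s, ∏ e ∈ T, c e a ^ x e
        = 0 := sum_eq_zero fun a ha => prod_eq_zero he <| by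
          rw [hce a ha, Real.zero_rpow (hx e he).ne']
      _ ≤ _ := hRHS
  push Not at hzero
  have hCpos : ∀ e ∈ T, 0 < C e := fun e he => (hC e he).lt_of_ne' (hzero e he)
  -- normalise each factor to total mass `1`, then apply weighted AM-GM pointwise
  have hpoint : ∀ a ∈ s, ∏ e ∈ T, c e a ^ x e ≤
      (∑ e ∈ T, x e / (∑ e' ∈ T, x e') * (c e a / C e)) * ∏ e ∈ T, C e ^ x e := by
    intro a ha
    have hsplit : ∏ e ∈ T, c e a ^ x e = (∏ e ∈ T, (c e a / C e) ^ x e) * ∏ e ∈ T, C e ^ x e := by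
      rw [← prod_mul_distrib]
      refine prod_congr rfl fun e he => ?_
      rw [← Real.mul_rpow (div_nonneg (hc e he a ha) (hC e he)) (hC e he),
        div_mul_cancel₀ _ (hCpos e he).ne']
    rw [hsplit]
    refine mul_le_mul_of_nonneg_right ?_ hRHS
    exact prod_rpow_le_weighted_mean_of_le_one T
      (fun e he => div_nonneg (hc e he a ha) (hC e he))
      (fun e he => div_le_one_of_le₀ (single_le_sum (hc e he) ha) (hC e he)) hx hsum
  have hmean : ∑ a ∈ s, ∑ e ∈ T, x e / (∑ e' ∈ T, x e') * (c e a / C e) = 1 := by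
    rw [sum_comm, ← div_self (one_pos.trans_le hsum).ne', sum_div]
    refine sum_congr rfl fun e he => ?_
    rw [← mul_sum, ← sum_div, div_self (hCpos e he).ne', mul_one]
  calc ∑ a ∈ s, ∏ e ∈ T, c e a ^ x e
      ≤ ∑ a ∈ s, (∑ e ∈ T, x e / (∑ e' ∈ T, x e') * (c e a / C e)) * ∏ e ∈ T, C e ^ x e :=
        sum_le_sum hpoint
    _ = ∏ e ∈ T, C e ^ x e := by rw [← sum_mul, hmean, one_mul]

end Holder

section FractionalCover

variable {ι α β : Type*} [Fintype α] [Fintype β]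

theorem sum_prod_rpow_le_of_fractional_cover (f₀ : α → β) (T : Finset ι) (x : ι → ℝ)
    (hx : ∀ e ∈ T, 0 < x e) (S : ι → Finset α) (c : ι → (α → β) → ℝ)
    (hc : ∀ e ∈ T, ∀ f, 0 ≤ c e f)
    (hdep : ∀ e ∈ T, ∀ f g : α → β, (∀ a ∈ S e, f a = g a) → c e f = c e g)
    (s : Finset α) (hcov : ∀ a ∈ s, 1 ≤ ∑ e ∈ T with a ∈ S e, x e) :
    ∑ f ∈ pinnedOutside f₀ s, ∏ e ∈ T, c e f ^ x e ≤
      ∏ e ∈ T, (∑ f ∈ pinnedOutside f₀ (S e), c e f) ^ x e := by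
  induction s using Finset.induction_on generalizing S c with
  | empty =>
    rw [pinnedOutside_empty, sum_singleton]
    refine prod_le_prod (fun e he => by have := hc e he f₀; positivity) fun e he => ?_
    exact Real.rpow_le_rpow (hc e he f₀)
      (single_le_sum (fun f _ => hc e he f) self_mem_pinnedOutside) (hx e he).le
  | @insert v s hv ih =>
    -- `A b e` is the factor of `e` on the slice where `v` takes the value `b`
    set A : β → ι → ℝ := fun b e =>
      ∑ g ∈ pinnedOutside f₀ ((S e).erase v), c e (Function.update g v b)
    set P : ι → ℝ := fun e => ∑ f ∈ pinnedOutside f₀ (S e), c e f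
    have hA_nonneg : ∀ b, ∀ e ∈ T, 0 ≤ A b e := fun b e he =>
      sum_nonneg fun g _ => hc e he _
    have hA_of_notMem : ∀ b, ∀ e ∈ T, v ∉ S e → A b e = P e := by
      intro b e he hvS
      simp only [A, P, erase_eq_of_notMem hvS]
      refine sum_congr rfl fun g _ => hdep e he _ _ fun a ha => ?_
      rw [Function.update_of_ne (ne_of_mem_of_not_mem ha hvS)]
    have hA_sum_of_mem : ∀ e ∈ T, v ∈ S e → ∑ b, A b e = P e := fun e _ hvS => by
      simp only [A, P]
      conv_rhs => rw [← insert_erase hvS]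
      rw [sum_pinnedOutside_insert (notMem_erase v (S e))]
    have hfix : ∀ b, ∑ g ∈ pinnedOutside f₀ s, ∏ e ∈ T, c e (Function.update g v b) ^ x e ≤
        ∏ e ∈ T, A b e ^ x e := by
      intro b
      refine ih (fun e => (S e).erase v) (fun e g => c e (Function.update g v b))
        (fun e he g => hc e he _) (fun e he f g hfg => hdep e he _ _ fun a ha => ?_)
        fun a ha => ?_
      · rcases eq_or_ne a v with rfl | hav
        · simp
        · simp only [Function.update_of_ne hav]
          exact hfg a (mem_erase.2 ⟨hav, ha⟩)
      · have hav : a ≠ v := ne_of_mem_of_not_mem ha hv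
        simpa [hav] using hcov a (mem_insert_of_mem ha)
    let Tv := T.filter fun e => v ∈ S e
    let Tnv := T.filter fun e => v ∉ S e
    have hsplit : ∀ F : ι → ℝ, ∏ e ∈ T, F e = (∏ e ∈ Tv, F e) * ∏ e ∈ Tnv, F e := fun F =>
      (prod_filter_mul_prod_filter_not T _ F).symm
    calc ∑ f ∈ pinnedOutside f₀ (insert v s), ∏ e ∈ T, c e f ^ x e
        = ∑ b, ∑ g ∈ pinnedOutside f₀ s, ∏ e ∈ T, c e (Function.update g v b) ^ x e :=
          sum_pinnedOutside_insert hv _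
      _ ≤ ∑ b, ∏ e ∈ T, A b e ^ x e := sum_le_sum fun b _ => hfix b
      _ = (∑ b, ∏ e ∈ Tv, A b e ^ x e) * ∏ e ∈ Tnv, P e ^ x e := by
          rw [sum_mul]
          refine sum_congr rfl fun b _ => ?_
          rw [hsplit]
          congr 1
          refine prod_congr rfl fun e he => ?_
          rw [mem_filter] at he
          rw [hA_of_notMem b e he.1 he.2]
      _ ≤ (∏ e ∈ Tv, (∑ b, A b e) ^ x e) * ∏ e ∈ Tnv, P e ^ x e := by
          refine mul_le_mul_of_nonneg_right ?_ (prod_nonneg fun e he => ?_)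
          · exact sum_prod_rpow_le_prod_sum_rpow _ _
              (fun e he b _ => hA_nonneg b e (mem_filter.1 he).1)
              (fun e he => hx e (mem_filter.1 he).1) (hcov v (mem_insert_self v s))
          · have := sum_nonneg fun f (_ : f ∈ pinnedOutside f₀ (S e)) =>
              hc e (mem_filter.1 he).1 f
            positivity
      _ = ∏ e ∈ T, P e ^ x e := by
          rw [hsplit]
          congr 1
          refine prod_congr rfl fun e he => ?_
          rw [mem_filter] at he
          rw [hA_sum_of_mem e he.1 he.2]

end FractionalCover

section BinaryJoin

variable {ι α β : Type*} [Fintype α] [Fintype β]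

theorem ite_one_zero_rpow {p : Prop} [Decidable p] {x : ℝ} (hx : x ≠ 0) :
    (if p then 1 else 0 : ℝ) ^ x = if p then 1 else 0 := by
  split_ifs <;> simp [hx]

theorem card_pinnedOutside_pair_le (f₀ : α → β) (p q : α) (M : Set (β × β)) :
    #{f ∈ pinnedOutside f₀ {p, q} | (f p, f q) ∈ M} ≤ Nat.card M := by
  rw [Nat.card_eq_card_toFinset]
  refine card_le_card_of_injOn (fun f => (f p, f q)) (fun f hf => ?_) fun f hf g hg hfg => ?_
  · simpa using (mem_filter.1 hf).2
  · simp only [coe_filter, Set.mem_ofPred_eq, mem_pinnedOutside] at hf hg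
    simp only [Prod.mk.injEq] at hfg
    funext a
    by_cases ha : a ∈ ({p, q} : Finset α)
    · rcases mem_insert.1 ha with rfl | ha
      · exact hfg.1
      · rw [mem_singleton.1 ha, hfg.2]
    · rw [hf.1 a ha, hg.1 a ha]

theorem card_binary_join_le (T : Finset ι) (src tgt : ι → α) (M : ι → Set (β × β))
    (x : ι → ℝ) (hx : ∀ e ∈ T, 0 < x e)
    (hcov : ∀ a, 1 ≤ ∑ e ∈ T with src e = a ∨ tgt e = a, x e) :
    (#{f : α → β | ∀ e ∈ T, (f (src e), f (tgt e)) ∈ M e} : ℝ) ≤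
      ∏ e ∈ T, (Nat.card (M e) : ℝ) ^ x e := by
  rcases isEmpty_or_nonempty (α → β) with _ | ⟨⟨f₀⟩⟩
  · simp only [univ_eq_empty, filter_empty, card_empty, Nat.cast_zero]
    exact prod_nonneg fun e _ => by positivity
  let c : ι → (α → β) → ℝ := fun e f => if (f (src e), f (tgt e)) ∈ M e then 1 else 0
  have key := sum_prod_rpow_le_of_fractional_cover f₀ T x hx (fun e => {src e, tgt e}) c
    (fun e _ f => by positivity)
    (fun e _ f g hfg => by simp only [c, hfg (src e) (by simp), hfg (tgt e) (by simp)])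
    univ fun a _ => by simpa [eq_comm] using hcov a
  calc (#{f : α → β | ∀ e ∈ T, (f (src e), f (tgt e)) ∈ M e} : ℝ)
      = ∑ f ∈ pinnedOutside f₀ univ, ∏ e ∈ T, c e f ^ x e := by
        simp only [pinnedOutside_univ, c, prod_congr rfl fun e he => ite_one_zero_rpow (hx e he).ne',
          prod_ite_zero, prod_const_one, sum_boole]
      _ ≤ ∏ e ∈ T, (∑ f ∈ pinnedOutside f₀ {src e, tgt e}, c e f) ^ x e := key
      _ ≤ ∏ e ∈ T, (Nat.card (M e) : ℝ) ^ x e := by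
        refine prod_le_prod (fun e _ => by positivity) fun e he => ?_
        refine Real.rpow_le_rpow (by positivity) ?_ (hx e he).le
        simp only [c, sum_boole]
        exact_mod_cast card_pinnedOutside_pair_le f₀ (src e) (tgt e) (M e)

end BinaryJoin

/-- AGM bound for hybrid pattern queries: if `x` is a fractional edge cover
of `Q` (positive weights whose sum over the edges incident to each query node
is at least `1`), then the number of homomorphisms from `Q` to `G` is at most
the product over all edges `e` of `Q` of `|ms(e)| ^ (x e)`. -/
theorem agm_bound {VQ VG L : Type*} [Fintype VQ] [Fintype VG]
    (Ed Er : VQ → VQ → Prop) (labQ : VQ → L)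
    (E : VG → VG → Prop) (labG : VG → L)
    (xd xr : VQ → VQ → ℝ)
    (hxd : ∀ p q, Ed p q → 0 < xd p q) (hxr : ∀ p q, Er p q → 0 < xr p q)
    (hcover : ∀ q : VQ,
      1 ≤ (∑ e ∈ Finset.univ.filter
              (fun e : VQ × VQ => Ed e.1 e.2 ∧ (e.1 = q ∨ e.2 = q)), xd e.1 e.2)
        + ∑ e ∈ Finset.univ.filter
              (fun e : VQ × VQ => Er e.1 e.2 ∧ (e.1 = q ∨ e.2 = q)), xr e.1 e.2) :
    (Nat.card {h : VQ → VG // IsHom Ed Er labQ E labG h} : ℝ) ≤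
      (∏ e ∈ Finset.univ.filter (fun e : VQ × VQ => Ed e.1 e.2),
        (Nat.card (msD labQ E labG e.1 e.2) : ℝ) ^ (xd e.1 e.2))
      * ∏ e ∈ Finset.univ.filter (fun e : VQ × VQ => Er e.1 e.2),
        (Nat.card (msR labQ E labG e.1 e.2) : ℝ) ^ (xr e.1 e.2) := by
  let T := (univ.filter fun e : VQ × VQ => Ed e.1 e.2).disjSum
    (univ.filter fun e : VQ × VQ => Er e.1 e.2)
  let M : (VQ × VQ) ⊕ (VQ × VQ) → Set (VG × VG) :=
    Sum.elim (fun e => msD labQ E labG e.1 e.2) (fun e => msR labQ E labG e.1 e.2)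
  let x : (VQ × VQ) ⊕ (VQ × VQ) → ℝ := Sum.elim (fun e => xd e.1 e.2) (fun e => xr e.1 e.2)
  let src : (VQ × VQ) ⊕ (VQ × VQ) → VQ := Sum.elim Prod.fst Prod.fst
  let tgt : (VQ × VQ) ⊕ (VQ × VQ) → VQ := Sum.elim Prod.snd Prod.snd
  have hbound := card_binary_join_le T src tgt M x
    (by rintro (⟨p, q⟩ | ⟨p, q⟩) he <;> simp_all [T, x]) fun a =>
      (hcover a).trans_eq (by simp [T, src, tgt, x, sum_filter, ite_and]; congr)
  refine (Nat.cast_le.2 ?_).trans (hbound.trans_eq (prod_disjSum _ _ _))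
  rw [Nat.card_eq_fintype_card, Fintype.card_subtype]
  refine card_le_card fun h hh => ?_
  simp only [mem_filter, mem_univ, true_and] at hh ⊢
  obtain ⟨hlab, hEd, hEr⟩ := hh
  rintro (⟨p, q⟩ | ⟨p, q⟩) he <;> simp only [T, inl_mem_disjSum, inr_mem_disjSum, mem_filter,
    mem_univ, true_and] at he
  exacts [⟨hlab p, hlab q, hEd p q he⟩, ⟨hlab p, hlab q, hEr p q he⟩]
end

section
/- AGM bound over a runtime index graph: let G be a data graph with finite node set, let G_Q be a runtime index graph of Q over G, and let x be a fractional edge cover of Q. Then the number of homomorphisms from Q to G is at most the product over all edges e of Q of |cos(e)|^{x_e}, where |cos(e)| is the cardinality of the candidate occurrence set of e in G_Q. -/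
open scoped Classical

/-- Occurrence set of a query edge `(p, q)`. -/
def os {VQ VG L : Type*} (Ed Er : VQ → VQ → Prop) (labQ : VQ → L)
    (E : VG → VG → Prop) (labG : VG → L) (p q : VQ) : Set (VG × VG) :=
  {uv | ∃ h, IsHom Ed Er labQ E labG h ∧ h p = uv.1 ∧ h q = uv.2}

/-!
Think of a homomorphism as a point `f : VQ → VG` and of each query edge `e = (p, q)` as the
indicator `w_e f` of `(f p, f q) ∈ cos(e)`; every homomorphism satisfies all indicators, so the
number of homomorphisms is at most `∑_f ∏_e (w_e f) ^ x_e`. Sum out the query nodes one at a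
time (an iterated integral against counting measure). At node `v`, the factors of the edges not
incident to `v` are constant, and Hölder's inequality with the exponents `x_e` of the incident
edges, which sum to at least `1` by the cover condition, moves the sum over `v` inside each
factor. After all nodes are summed out, the factor of `e` is at most `|cos(e)| ^ x_e`.
-/

open MeasureTheory Finset
open scoped ENNReal

theorem ENNReal.sum_rpow_le_rpow_sum {ι : Type*} (s : Finset ι) (f : ι → ℝ≥0∞) {p : ℝ}
    (hp : 1 ≤ p) : ∑ i ∈ s, f i ^ p ≤ (∑ i ∈ s, f i) ^ p := by
  induction s using Finset.cons_induction with
  | empty => simp [ENNReal.zero_rpow_of_pos (one_pos.trans_le hp)]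
  | cons i s hi ih =>
    rw [sum_cons, sum_cons]
    exact (add_le_add_right ih _).trans (ENNReal.add_rpow_le_rpow_add _ _ hp)

theorem ENNReal.lintegral_count_prod_rpow_le {α ι : Type*} [Fintype α] [MeasurableSpace α]
    [MeasurableSingletonClass α] (s : Finset ι) (f : ι → α → ℝ≥0∞) {p : ι → ℝ}
    (hp : 1 ≤ ∑ i ∈ s, p i) (hp₀ : ∀ i ∈ s, 0 ≤ p i) :
    ∫⁻ a : α, ∏ i ∈ s, f i a ^ p i ∂Measure.count ≤
      ∏ i ∈ s, (∫⁻ a, f i a ∂Measure.count) ^ p i := by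
  -- Rescale to the exponents `p i / P`, which sum to `1`, and absorb the factor `P ≥ 1` using
  -- `∑ a ^ P ≤ (∑ a) ^ P`.
  set P := ∑ i ∈ s, p i
  have hP : 0 < P := one_pos.trans_le hp
  have hq₀ : ∀ i ∈ s, 0 ≤ p i / P := fun i hi => div_nonneg (hp₀ i hi) hP.le
  have hpow : ∀ (a : ℝ≥0∞) i, (a ^ P) ^ (p i / P) = a ^ p i := fun a i => by
    rw [← ENNReal.rpow_mul, mul_div_cancel₀ _ hP.ne']
  calc ∫⁻ a, ∏ i ∈ s, f i a ^ p i ∂Measure.count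
      = ∫⁻ a, ∏ i ∈ s, (f i a ^ P) ^ (p i / P) ∂Measure.count := by simp only [hpow]
    _ ≤ ∏ i ∈ s, (∫⁻ a, f i a ^ P ∂Measure.count) ^ (p i / P) :=
        ENNReal.lintegral_prod_norm_pow_le s (fun i _ => Measurable.of_discrete.aemeasurable)
          (by rw [← sum_div, div_self hP.ne']) hq₀
    _ ≤ ∏ i ∈ s, ((∫⁻ a, f i a ∂Measure.count) ^ P) ^ (p i / P) := by
        refine prod_le_prod' fun i hi => ENNReal.rpow_le_rpow ?_ (hq₀ i hi)
        simpa only [lintegral_count, tsum_fintype] using ENNReal.sum_rpow_le_rpow_sum _ _ hp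
    _ = ∏ i ∈ s, (∫⁻ a, f i a ∂Measure.count) ^ p i := by simp only [hpow]

theorem MeasureTheory.Measure.pi_count {ι α : Type*} [Fintype ι] [Countable α]
    [MeasurableSpace α] [MeasurableSingletonClass α] :
    Measure.pi (fun _ : ι => (Measure.count : Measure α)) = Measure.count :=
  Measure.ext_of_singleton fun f => by simp [Measure.pi_singleton]

theorem MeasureTheory.lmarginal_count_eq_sum {V α : Type*} [DecidableEq V] [Fintype α]
    [MeasurableSpace α] [MeasurableSingletonClass α] (s : Finset V) (f : (V → α) → ℝ≥0∞)
    (x : V → α) :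
    (∫⋯∫⁻_s, f ∂fun _ : V => (Measure.count : Measure α)) x =
      ∑ y : s → α, f (Function.updateFinset x s y) := by
  rw [lmarginal, Measure.pi_count, lintegral_count, tsum_fintype]

theorem DependsOn.lmarginal {V : Type*} {X : V → Type*} [DecidableEq V]
    [∀ v, MeasurableSpace (X v)] (μ : ∀ v, Measure (X v)) {f : (∀ v, X v) → ℝ≥0∞} {S : Set V}
    (hf : DependsOn f S) (s : Finset V) : DependsOn (∫⋯∫⁻_s, f ∂μ) S := by
  intro x y hxy
  refine lintegral_congr fun z => hf fun v hv => ?_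
  simp only [Function.updateFinset]
  split_ifs
  · rfl
  · exact hxy v hv

theorem lmarginal_prod_rpow_le {V F ι : Type*} [Fintype V] [DecidableEq V] [Fintype F]
    [MeasurableSpace F] [MeasurableSingletonClass F] (t : Finset ι) (e : ι → Finset V)
    (w : ι → (V → F) → ℝ≥0∞) (hw : ∀ i ∈ t, DependsOn (w i) (e i)) (x : ι → ℝ)
    (hx : ∀ i ∈ t, 0 ≤ x i) (s : Finset V) (hcov : ∀ v ∈ s, 1 ≤ ∑ i ∈ t with v ∈ e i, x i)
    (f₀ : V → F) :
    (∫⋯∫⁻_s, (fun f => ∏ i ∈ t, w i f ^ x i) ∂fun _ => Measure.count) f₀ ≤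
      ∏ i ∈ t, (∫⋯∫⁻_(e i ∩ s), w i ∂fun _ => Measure.count) f₀ ^ x i := by
  induction s using Finset.induction_on generalizing f₀ with
  | empty => simp
  | insert v s hv ih =>
    set M := fun i => ∫⋯∫⁻_(e i ∩ s), w i ∂fun _ : V => (Measure.count : Measure F)
    have hM_update : ∀ i ∈ t, v ∉ e i → ∀ a, M i (Function.update f₀ v a) = M i f₀ :=
      fun i hi hvi a => (hw i hi).lmarginal _ _ fun u hu =>
        Function.update_of_ne (ne_of_mem_of_not_mem hu hvi) a f₀
    have hM_insert : ∀ i, v ∈ e i → (∫⋯∫⁻_(e i ∩ insert v s), w i ∂fun _ => Measure.count) f₀ =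
        ∫⁻ a, M i (Function.update f₀ v a) ∂Measure.count := fun i hvi => by
      rw [inter_insert_of_mem hvi, lmarginal_insert _ Measurable.of_discrete
        fun h => hv (mem_of_mem_inter_right h)]
    calc (∫⋯∫⁻_(insert v s), (fun f => ∏ i ∈ t, w i f ^ x i) ∂fun _ => Measure.count) f₀
        = ∫⁻ a, (∫⋯∫⁻_s, (fun f => ∏ i ∈ t, w i f ^ x i) ∂fun _ => Measure.count)
            (Function.update f₀ v a) ∂Measure.count := by
          rw [lmarginal_insert _ Measurable.of_discrete hv]
      _ ≤ ∫⁻ a, ∏ i ∈ t, M i (Function.update f₀ v a) ^ x i ∂Measure.count :=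
          lintegral_mono fun a => ih (fun u hu => hcov u (mem_insert_of_mem hu)) _
      _ = ∫⁻ a, (∏ i ∈ t with v ∈ e i, M i (Function.update f₀ v a) ^ x i) *
            ∏ i ∈ t with v ∉ e i, M i f₀ ^ x i ∂Measure.count := by
          refine lintegral_congr fun a => ?_
          rw [← prod_filter_mul_prod_filter_not t (v ∈ e ·)]
          congr 1
          refine prod_congr rfl fun i hi => ?_
          rw [mem_filter] at hi
          rw [hM_update i hi.1 hi.2]
      _ = (∫⁻ a, ∏ i ∈ t with v ∈ e i, M i (Function.update f₀ v a) ^ x i ∂Measure.count) *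
            ∏ i ∈ t with v ∉ e i, M i f₀ ^ x i :=
          lintegral_mul_const _ Measurable.of_discrete
      _ ≤ (∏ i ∈ t with v ∈ e i, (∫⁻ a, M i (Function.update f₀ v a) ∂Measure.count) ^ x i) *
            ∏ i ∈ t with v ∉ e i, M i f₀ ^ x i := by
          gcongr
          exact ENNReal.lintegral_count_prod_rpow_le _ _ (hcov v (mem_insert_self v s))
            fun i hi => hx i (mem_filter.1 hi).1
      _ = ∏ i ∈ t, (∫⋯∫⁻_(e i ∩ insert v s), w i ∂fun _ => Measure.count) f₀ ^ x i := by
          rw [← prod_filter_mul_prod_filter_not t (v ∈ e ·)]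
          congr 1 <;> refine prod_congr rfl fun i hi => ?_
          · rw [hM_insert i (mem_filter.1 hi).2]
          · rw [inter_insert_of_notMem (mem_filter.1 hi).2]

theorem lmarginal_count_pair_le_card {V F : Type*} [DecidableEq V] [Fintype F]
    [MeasurableSpace F] [MeasurableSingletonClass F] (p q : V) (C : Set (F × F)) (f₀ : V → F) :
    (∫⋯∫⁻_{p, q}, (fun f : V → F => if (f p, f q) ∈ C then 1 else 0) ∂fun _ => Measure.count) f₀ ≤
      Nat.card C := by
  have hp : p ∈ ({p, q} : Finset V) := mem_insert_self p {q}
  have hq : q ∈ ({p, q} : Finset V) := mem_insert_of_mem (mem_singleton_self q)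
  -- A point of `{p, q} → F` is determined by its values at `p` and `q`, also when `p = q`.
  have hinj : Function.Injective
      fun y : {y : ({p, q} : Finset V) → F // (y ⟨p, hp⟩, y ⟨q, hq⟩) ∈ C} =>
        (⟨(y.1 ⟨p, hp⟩, y.1 ⟨q, hq⟩), y.2⟩ : C) := by
    rintro ⟨y, hy⟩ ⟨y', hy'⟩ h
    simp only [Subtype.mk.injEq, Prod.mk.injEq] at h
    ext ⟨u, hu⟩
    obtain rfl | rfl : u = p ∨ u = q := by simpa using hu
    exacts [h.1, h.2]
  rw [lmarginal_count_eq_sum]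
  simp only [Function.updateFinset, dif_pos hp, dif_pos hq]
  rw [sum_boole, ← Fintype.card_subtype, ← Nat.card_eq_fintype_card]
  exact_mod_cast Nat.card_le_card_of_injective _ hinj

theorem card_le_prod_card_rpow_ennreal {V F ι : Type*} [Fintype V] [Fintype F] (t : Finset ι)
    (ends : ι → V × V) (C : ι → Set (F × F)) (x : ι → ℝ) (hx : ∀ i ∈ t, 0 ≤ x i)
    (hcov : ∀ v, 1 ≤ ∑ i ∈ t with (ends i).1 = v ∨ (ends i).2 = v, x i) :
    (Nat.card {f : V → F // ∀ i ∈ t, (f (ends i).1, f (ends i).2) ∈ C i} : ℝ≥0∞) ≤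
      ∏ i ∈ t, (Nat.card (C i) : ℝ≥0∞) ^ x i := by
  let _ : MeasurableSpace F := ⊤
  have : MeasurableSingletonClass F := ⟨fun _ => trivial⟩
  rcases isEmpty_or_nonempty (V → F) with hVF | ⟨⟨f₀⟩⟩
  · simp
  set w : ι → (V → F) → ℝ≥0∞ := fun i f => if (f (ends i).1, f (ends i).2) ∈ C i then 1 else 0
  have hw : ∀ i ∈ t, DependsOn (w i) ({(ends i).1, (ends i).2} : Finset V) := fun i _ f g h => by
    simp only [w, h (ends i).1 (by simp), h (ends i).2 (by simp)]
  have hcov' : ∀ v ∈ univ, 1 ≤ ∑ i ∈ t with v ∈ ({(ends i).1, (ends i).2} : Finset V), x i :=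
    fun v _ => by simpa only [mem_insert, mem_singleton, eq_comm] using hcov v
  calc (Nat.card {f : V → F // ∀ i ∈ t, (f (ends i).1, f (ends i).2) ∈ C i} : ℝ≥0∞)
      ≤ ∑ f, ∏ i ∈ t, w i f ^ x i := by
        rw [Nat.card_eq_fintype_card, Fintype.card_subtype, ← sum_boole]
        gcongr with f
        split_ifs with hf
        · exact (prod_eq_one fun i hi => by simp [w, hf i hi]).ge
        · exact zero_le
    _ = (∫⋯∫⁻_univ, (fun f => ∏ i ∈ t, w i f ^ x i) ∂fun _ => Measure.count) f₀ := by
        rw [lmarginal_univ, Measure.pi_count, lintegral_count, tsum_fintype]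
    _ ≤ ∏ i ∈ t, (∫⋯∫⁻_({(ends i).1, (ends i).2} ∩ univ), w i ∂fun _ => Measure.count) f₀ ^ x i :=
        lmarginal_prod_rpow_le t _ w hw x hx univ hcov' f₀
    _ ≤ ∏ i ∈ t, (Nat.card (C i) : ℝ≥0∞) ^ x i := by
        refine prod_le_prod' fun i hi => ENNReal.rpow_le_rpow ?_ (hx i hi)
        rw [inter_univ]
        exact lmarginal_count_pair_le_card _ _ _ f₀

theorem card_le_prod_card_rpow {V F ι : Type*} [Fintype V] [Fintype F] (t : Finset ι)
    (ends : ι → V × V) (C : ι → Set (F × F)) (x : ι → ℝ) (hx : ∀ i ∈ t, 0 ≤ x i)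
    (hcov : ∀ v, 1 ≤ ∑ i ∈ t with (ends i).1 = v ∨ (ends i).2 = v, x i) :
    (Nat.card {f : V → F // ∀ i ∈ t, (f (ends i).1, f (ends i).2) ∈ C i} : ℝ) ≤
      ∏ i ∈ t, (Nat.card (C i) : ℝ) ^ x i := by
  have hfin : ∏ i ∈ t, (Nat.card (C i) : ℝ≥0∞) ^ x i ≠ ⊤ := ENNReal.prod_ne_top fun i hi =>
    ENNReal.rpow_ne_top_of_nonneg (hx i hi) (ENNReal.natCast_ne_top _)
  simpa [ENNReal.toReal_prod, ← ENNReal.toReal_rpow] using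
    ENNReal.toReal_mono hfin (card_le_prod_card_rpow_ennreal t ends C x hx hcov)

/-- AGM bound over a runtime index graph: if `G_Q` is a runtime index graph
of `Q` over `G` (so `os(e) ⊆ cos(e) ⊆ ms(e)` for every edge `e` of `Q`) and
`x` is a fractional edge cover of `Q`, then the number of homomorphisms from
`Q` to `G` is at most the product over all edges `e` of `Q` of
`|cos(e)| ^ (x e)`. -/
theorem agm_bound_rig {VQ VG L : Type*} [Fintype VQ] [Fintype VG]
    (Ed Er : VQ → VQ → Prop) (labQ : VQ → L)
    (E : VG → VG → Prop) (labG : VG → L)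
    (cosD cosR : VQ → VQ → Set (VG × VG))
    (hrigD : ∀ p q, Ed p q →
      os Ed Er labQ E labG p q ⊆ cosD p q ∧ cosD p q ⊆ msD labQ E labG p q)
    (hrigR : ∀ p q, Er p q →
      os Ed Er labQ E labG p q ⊆ cosR p q ∧ cosR p q ⊆ msR labQ E labG p q)
    (xd xr : VQ → VQ → ℝ)
    (hxd : ∀ p q, Ed p q → 0 < xd p q) (hxr : ∀ p q, Er p q → 0 < xr p q)
    (hcover : ∀ q : VQ,
      1 ≤ (∑ e ∈ Finset.univ.filter
              (fun e : VQ × VQ => Ed e.1 e.2 ∧ (e.1 = q ∨ e.2 = q)), xd e.1 e.2)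
        + ∑ e ∈ Finset.univ.filter
              (fun e : VQ × VQ => Er e.1 e.2 ∧ (e.1 = q ∨ e.2 = q)), xr e.1 e.2) :
    (Nat.card {h : VQ → VG // IsHom Ed Er labQ E labG h} : ℝ) ≤
      (∏ e ∈ Finset.univ.filter (fun e : VQ × VQ => Ed e.1 e.2),
        (Nat.card (cosD e.1 e.2) : ℝ) ^ (xd e.1 e.2))
      * ∏ e ∈ Finset.univ.filter (fun e : VQ × VQ => Er e.1 e.2),
        (Nat.card (cosR e.1 e.2) : ℝ) ^ (xr e.1 e.2) := by
  set t : Finset ((VQ × VQ) ⊕ (VQ × VQ)) :=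
    ({e | Ed e.1 e.2} : Finset _).disjSum {e | Er e.1 e.2} with ht
  set C : (VQ × VQ) ⊕ (VQ × VQ) → Set (VG × VG) :=
    Sum.elim (fun e => cosD e.1 e.2) (fun e => cosR e.1 e.2)
  set x : (VQ × VQ) ⊕ (VQ × VQ) → ℝ :=
    Sum.elim (fun e => xd e.1 e.2) (fun e => xr e.1 e.2) with hxdef
  have hhom : ∀ h, IsHom Ed Er labQ E labG h →
      ∀ i ∈ t, (h (Sum.elim id id i).1, h (Sum.elim id id i).2) ∈ C i := by
    rintro h hh (e | e) he <;>
      simp only [ht, inl_mem_disjSum, inr_mem_disjSum, mem_filter, mem_univ, true_and] at he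
    · exact (hrigD e.1 e.2 he).1 ⟨h, hh, rfl, rfl⟩
    · exact (hrigR e.1 e.2 he).1 ⟨h, hh, rfl, rfl⟩
  have hx : ∀ i ∈ t, 0 ≤ x i := by
    rintro (e | e) he <;>
      simp only [ht, inl_mem_disjSum, inr_mem_disjSum, mem_filter, mem_univ, true_and] at he
    exacts [(hxd e.1 e.2 he).le, (hxr e.1 e.2 he).le]
  have hcov : ∀ q, 1 ≤ ∑ i ∈ t with (Sum.elim id id i).1 = q ∨ (Sum.elim id id i).2 = q, x i := by
    intro q
    convert hcover q using 1
    simp only [ht, hxdef, sum_filter, sum_disjSum, ite_and]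
    -- the two sides differ only in their `Decidable` instances
    congr
  calc (Nat.card {h : VQ → VG // IsHom Ed Er labQ E labG h} : ℝ)
      ≤ Nat.card {f : VQ → VG //
          ∀ i ∈ t, (f (Sum.elim id id i).1, f (Sum.elim id id i).2) ∈ C i} := by
        exact_mod_cast Nat.card_le_card_of_injective _ (Subtype.impEmbedding _ _ hhom).injective
    _ ≤ ∏ i ∈ t, (Nat.card (C i) : ℝ) ^ x i := card_le_prod_card_rpow t _ C x hx hcov
    _ = _ := prod_disjSum _ _ _
end

section
/- Query decomposition lemma: let Q be a graph with finite node set V_Q and edges e_1, …, e_m (ordered pairs of nodes), let D be a finite set, and for each edge e_j let R_j ⊆ D × D be a finite relation. Let x_1, …, x_m be a fractional edge cover of Q (x_j > 0 for all j, and for every node q the sum of x_j over edges e_j incident to q is at least 1). Let U be a nonempty proper subset of V_Q, let E_U be the set of edges having at least one endpoint in U, and let L be the set of partial tuples t_U : U → D such that R_j ⋉ t_U is nonempty for every e_j ∈ E_U. Then the sum over all t_U ∈ L of the product over j = 1, …, m of |R_j ⋉ t_U|^{x_j} is at most the product over j = 1, …, m of |R_j|^{x_j}. -/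
open scoped Classical

/-- Semijoin `R_j ⋉ t_U` of a relation `Rj ⊆ D × D` associated with the
edge `e = (a, b)` with a partial tuple `t : U → D`: the pairs `(u, v) ∈ Rj`
such that `u = t a` whenever `a ∈ U` and `v = t b` whenever `b ∈ U`. -/
def semijoin {VQ D : Type*} (Rj : Set (D × D)) (e : VQ × VQ) (U : Set VQ)
    (t : U → D) : Set (D × D) :=
  {p ∈ Rj | (∀ h1 : e.1 ∈ U, p.1 = t ⟨e.1, h1⟩) ∧ (∀ h2 : e.2 ∈ U, p.2 = t ⟨e.2, h2⟩)}

/-! Fix the nodes of `U` one at a time. Fixing the value `d` at a new node `q` leaves the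
semijoins of edges away from `q` unchanged and splits those of edges at `q` into disjoint fibres
indexed by `d`. Since the weights of the edges at `q` sum to at least `1`, a Hölder-type inequality
(weighted AM-GM after normalising) shows that summing over `d` does not increase
`∑ ∏ |R j ⋉ t| ^ x j`. Starting from no fixed node, where every semijoin is the whole relation,
induction bounds the sum over all tuples on `U`, of which `L` is a subset. -/

open Finset

section MeanInequality

variable {ι κ : Type*} [Fintype κ] {A : Finset ι} {x : ι → ℝ}

theorem sum_prod_rpow_le_one (hx : ∀ j ∈ A, 0 ≤ x j) (hA : 1 ≤ ∑ j ∈ A, x j)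
    {a : ι → κ → ℝ} (ha : ∀ j ∈ A, ∀ k, 0 ≤ a j k) (ha_sum : ∀ j ∈ A, ∑ k, a j k ≤ 1) :
    ∑ k, ∏ j ∈ A, a j k ^ x j ≤ 1 := by
  set s := ∑ j ∈ A, x j
  have hs : 0 < s := one_pos.trans_le hA
  have hw : ∀ j ∈ A, 0 ≤ x j / s := fun j hj => div_nonneg (hx j hj) hs.le
  have hw_sum : ∑ j ∈ A, x j / s = 1 := by rw [← sum_div, div_self hs.ne']
  have ha_le_one : ∀ j ∈ A, ∀ k, a j k ≤ 1 := fun j hj k =>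
    (single_le_sum (fun k _ => ha j hj k) (mem_univ k)).trans (ha_sum j hj)
  calc ∑ k, ∏ j ∈ A, a j k ^ x j
      ≤ ∑ k, ∏ j ∈ A, a j k ^ (x j / s) := by
        refine sum_le_sum fun k _ => prod_le_prod (fun j hj => Real.rpow_nonneg (ha j hj k) _)
          fun j hj => ?_
        exact Real.rpow_le_rpow_of_exponent_ge' (ha j hj k) (ha_le_one j hj k) (hw j hj)
          (div_le_self (hx j hj) hA)
    _ ≤ ∑ k, ∑ j ∈ A, x j / s * a j k := by
        gcongr with k
        exact Real.geom_mean_le_arith_mean_weighted A _ _ hw hw_sum fun j hj => ha j hj k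
    _ = ∑ j ∈ A, x j / s * ∑ k, a j k := by
        rw [sum_comm]; simp only [mul_sum]
    _ ≤ ∑ j ∈ A, x j / s := by
        gcongr with j hj
        exact mul_le_of_le_one_right (hw j hj) (ha_sum j hj)
    _ = 1 := hw_sum

theorem sum_prod_rpow_le_prod_rpow (hx : ∀ j ∈ A, 0 < x j) (hA : 1 ≤ ∑ j ∈ A, x j)
    {c : ι → κ → ℝ} (hc : ∀ j ∈ A, ∀ k, 0 ≤ c j k) {b : ι → ℝ}
    (hcb : ∀ j ∈ A, ∑ k, c j k ≤ b j) :
    ∑ k, ∏ j ∈ A, c j k ^ x j ≤ ∏ j ∈ A, b j ^ x j := by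
  have hb : ∀ j ∈ A, 0 ≤ b j := fun j hj => (sum_nonneg fun k _ => hc j hj k).trans (hcb j hj)
  have hprod : 0 ≤ ∏ j ∈ A, b j ^ x j := prod_nonneg fun j hj => Real.rpow_nonneg (hb j hj) _
  by_cases hzero : ∃ j ∈ A, b j = 0
  · obtain ⟨j, hj, hbj⟩ := hzero
    have hcj : ∀ k, c j k = 0 := fun k =>
      (sum_eq_zero_iff_of_nonneg fun k _ => hc j hj k).mp
        (le_antisymm (hbj ▸ hcb j hj) (sum_nonneg fun k _ => hc j hj k)) k (mem_univ k)
    rwa [sum_eq_zero fun k _ => prod_eq_zero hj (by rw [hcj k, Real.zero_rpow (hx j hj).ne'])]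
  push Not at hzero
  have hb_pos : ∀ j ∈ A, 0 < b j := fun j hj => (hb j hj).lt_of_ne' (hzero j hj)
  have hnormalized : ∑ k, ∏ j ∈ A, (c j k / b j) ^ x j ≤ 1 :=
    sum_prod_rpow_le_one (fun j hj => (hx j hj).le) hA
      (fun j hj k => div_nonneg (hc j hj k) (hb j hj))
      (fun j hj => by rw [← sum_div]; exact div_le_one_of_le₀ (hcb j hj) (hb j hj))
  calc ∑ k, ∏ j ∈ A, c j k ^ x j
      = (∏ j ∈ A, b j ^ x j) * ∑ k, ∏ j ∈ A, (c j k / b j) ^ x j := by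
        rw [mul_sum]
        refine sum_congr rfl fun k _ => ?_
        rw [← prod_mul_distrib]
        refine prod_congr rfl fun j hj => ?_
        rw [← Real.mul_rpow (hb j hj) (div_nonneg (hc j hj k) (hb j hj)),
          mul_div_cancel₀ _ (hb_pos j hj).ne']
    _ ≤ ∏ j ∈ A, b j ^ x j := mul_le_of_le_one_right hprod hnormalized

end MeanInequality

theorem sum_natCard_le_natCard_of_subset_fiber {α β : Type*} [Finite α] [Fintype β]
    {S : Set α} {T : β → Set α} (f : α → β) (hT : ∀ b, T b ⊆ S ∩ f ⁻¹' {b}) :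
    ∑ b, Nat.card (T b) ≤ Nat.card S := by
  rw [← Nat.card_sigma]
  refine Nat.card_le_card_of_injective (fun p => ⟨p.2, (hT p.1 p.2.2).1⟩) ?_
  rintro ⟨b, p, hp⟩ ⟨b', p', hp'⟩ h
  obtain rfl : p = p' := congrArg Subtype.val h
  obtain rfl : b = b' := ((hT b hp).2).symm.trans (hT b' hp').2
  rfl

section Semijoin

variable {V D : Type*}

def semijoinOn (Rj : Set (D × D)) (e : V × V) (W : Set V) (t : V → D) : Set (D × D) :=
  {p ∈ Rj | (e.1 ∈ W → p.1 = t e.1) ∧ (e.2 ∈ W → p.2 = t e.2)}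

theorem semijoin_domRestrict (Rj : Set (D × D)) (e : V × V) (U : Set V) (t : V → D) :
    semijoin Rj e U (U.domRestrict t) = semijoinOn Rj e U t :=
  rfl

@[simp]
theorem semijoinOn_empty (Rj : Set (D × D)) (e : V × V) (t : V → D) :
    semijoinOn Rj e ∅ t = Rj := by
  simp [semijoinOn]

variable [DecidableEq V] {Rj : Set (D × D)} {e : V × V} {W : Set V} {q : V}

theorem semijoinOn_insert_update_of_not_incident (h₁ : e.1 ≠ q) (h₂ : e.2 ≠ q) (t : V → D)
    (d : D) : semijoinOn Rj e (insert q W) (Function.update t q d) = semijoinOn Rj e W t := by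
  simp [semijoinOn, h₁, h₂]

theorem semijoinOn_insert_update_subset (hq : q ∉ W) (he : e.1 = q ∨ e.2 = q) (t : V → D)
    (d : D) : semijoinOn Rj e (insert q W) (Function.update t q d) ⊆
      semijoinOn Rj e W t ∩ (fun p => if e.1 = q then p.1 else p.2) ⁻¹' {d} := by
  rintro p ⟨hp, h₁, h₂⟩
  refine ⟨⟨hp, fun h => ?_, fun h => ?_⟩, ?_⟩
  · rw [h₁ (Or.inr h), Function.update_of_ne (ne_of_mem_of_not_mem h hq)]
  · rw [h₂ (Or.inr h), Function.update_of_ne (ne_of_mem_of_not_mem h hq)]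
  · by_cases he₁ : e.1 = q
    · simp [he₁, h₁ (Or.inl he₁)]
    · simp [he₁, h₂ (Or.inl (he.resolve_left he₁)), he.resolve_left he₁]

theorem sum_natCard_semijoinOn_insert_update_le [Fintype D] (hq : q ∉ W)
    (he : e.1 = q ∨ e.2 = q) (t : V → D) :
    ∑ d, Nat.card (semijoinOn Rj e (insert q W) (Function.update t q d)) ≤
      Nat.card (semijoinOn Rj e W t) :=
  sum_natCard_le_natCard_of_subset_fiber _ (semijoinOn_insert_update_subset hq he t)

end Semijoin

section PaddedTuples

variable {V D : Type*} [Fintype V] [DecidableEq V] [Fintype D]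

/-- A partial tuple on `W` is encoded as the total tuple that takes the value `d₀` off `W`. -/
noncomputable def paddedTuples (W : Set V) (d₀ : D) : Finset (V → D) :=
  univ.filter fun t => ∀ r ∉ W, t r = d₀

@[simp]
theorem mem_paddedTuples {W : Set V} {d₀ : D} {t : V → D} :
    t ∈ paddedTuples W d₀ ↔ ∀ r ∉ W, t r = d₀ := by
  simp [paddedTuples]

theorem paddedTuples_empty (d₀ : D) : paddedTuples (∅ : Set V) d₀ = {fun _ => d₀} := by
  ext t
  simp [funext_iff]

theorem sum_paddedTuples_insert {M : Type*} [AddCommMonoid M] {W : Set V} {q : V} (hq : q ∉ W)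
    (d₀ : D) (f : (V → D) → M) :
    ∑ t ∈ paddedTuples (insert q W) d₀, f t =
      ∑ t ∈ paddedTuples W d₀, ∑ d, f (Function.update t q d) := by
  rw [← sum_product']
  symm
  refine sum_nbij' (fun p => Function.update p.1 q p.2) (fun t => (Function.update t q d₀, t q))
    ?_ ?_ ?_ ?_ (fun _ _ => rfl)
  · simp only [mem_product, mem_paddedTuples, mem_univ, and_true, Set.mem_insert_iff, not_or]
    intro p hp r hr
    rw [Function.update_of_ne hr.1, hp r hr.2]
  · simp only [mem_product, mem_paddedTuples, mem_univ, and_true, Set.mem_insert_iff, not_or]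
    intro t ht r hr
    by_cases hrq : r = q
    · simp [hrq]
    · rw [Function.update_of_ne hrq, ht r ⟨hrq, hr⟩]
  · simp only [mem_product, mem_paddedTuples, mem_univ, and_true]
    intro p hp
    refine Prod.ext ?_ (Function.update_self _ _ _)
    dsimp only
    rw [Function.update_idem, ← hp q hq, Function.update_eq_self]
  · intro t _
    simp

theorem sum_paddedTuples_domRestrict {M : Type*} [AddCommMonoid M] (U : Set V) (d₀ : D)
    (g : (U → D) → M) :
    ∑ t ∈ paddedTuples U d₀, g (U.domRestrict t) = ∑ t, g t := by
  refine sum_nbij' U.domRestrict (fun t r => if h : r ∈ U then t ⟨r, h⟩ else d₀)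
    (fun _ _ => mem_univ _) ?_ ?_ ?_ (fun _ _ => rfl)
  · intro t _
    simp +contextual
  · intro t ht
    ext r
    by_cases hr : r ∈ U
    · simp [hr, Set.domRestrict]
    · simp [hr, (mem_paddedTuples.mp ht) r hr]
  · intro t _
    ext r
    simp [Set.domRestrict]

end PaddedTuples

section Elimination

variable {V D ι : Type*} [DecidableEq V] [Fintype D] [Fintype ι]
  {e : ι → V × V} {R : ι → Set (D × D)} {x : ι → ℝ}

theorem sum_prod_semijoinOn_insert_update_le (hx : ∀ j, 0 < x j) {q : V}
    (hcover : 1 ≤ ∑ j ∈ univ.filter (fun j => (e j).1 = q ∨ (e j).2 = q), x j)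
    {W : Set V} (hq : q ∉ W) (t : V → D) :
    ∑ d, ∏ j, (Nat.card (semijoinOn (R j) (e j) (insert q W) (Function.update t q d)) : ℝ) ^ x j
      ≤ ∏ j, (Nat.card (semijoinOn (R j) (e j) W t) : ℝ) ^ x j := by
  set incident : ι → Prop := fun j => (e j).1 = q ∨ (e j).2 = q
  set A := univ.filter incident
  have hfixed : ∀ j ∈ univ.filter (fun j => ¬incident j), ∀ d,
      semijoinOn (R j) (e j) (insert q W) (Function.update t q d) = semijoinOn (R j) (e j) W t :=
    fun j hj d => by
      simp only [mem_filter, mem_univ, true_and, incident, not_or] at hj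
      exact semijoinOn_insert_update_of_not_incident hj.1 hj.2 t d
  have hA : ∑ d, ∏ j ∈ A,
        (Nat.card (semijoinOn (R j) (e j) (insert q W) (Function.update t q d)) : ℝ) ^ x j
      ≤ ∏ j ∈ A, (Nat.card (semijoinOn (R j) (e j) W t) : ℝ) ^ x j :=
    sum_prod_rpow_le_prod_rpow (fun j _ => hx j) hcover (fun _ _ _ => Nat.cast_nonneg _)
      fun j hj => by
        exact_mod_cast sum_natCard_semijoinOn_insert_update_le hq (mem_filter.mp hj).2 t
  calc ∑ d, ∏ j,
        (Nat.card (semijoinOn (R j) (e j) (insert q W) (Function.update t q d)) : ℝ) ^ x j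
      = (∑ d, ∏ j ∈ A,
          (Nat.card (semijoinOn (R j) (e j) (insert q W) (Function.update t q d)) : ℝ) ^ x j) *
        ∏ j ∈ univ.filter (fun j => ¬incident j),
          (Nat.card (semijoinOn (R j) (e j) W t) : ℝ) ^ x j := by
        rw [sum_mul]
        refine sum_congr rfl fun d _ => ?_
        rw [← prod_filter_mul_prod_filter_not univ incident]
        congr 1
        exact prod_congr rfl fun j hj => by rw [hfixed j hj d]
    _ ≤ (∏ j ∈ A, (Nat.card (semijoinOn (R j) (e j) W t) : ℝ) ^ x j) *
        ∏ j ∈ univ.filter (fun j => ¬incident j),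
          (Nat.card (semijoinOn (R j) (e j) W t) : ℝ) ^ x j :=
        mul_le_mul_of_nonneg_right hA
          (prod_nonneg fun _ _ => Real.rpow_nonneg (Nat.cast_nonneg _) _)
    _ = ∏ j, (Nat.card (semijoinOn (R j) (e j) W t) : ℝ) ^ x j :=
        prod_filter_mul_prod_filter_not univ incident _

theorem sum_paddedTuples_prod_semijoinOn_le [Fintype V] (hx : ∀ j, 0 < x j)
    (hcover : ∀ q, 1 ≤ ∑ j ∈ univ.filter (fun j => (e j).1 = q ∨ (e j).2 = q), x j)
    (W : Set V) (d₀ : D) :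
    ∑ t ∈ paddedTuples W d₀, ∏ j, (Nat.card (semijoinOn (R j) (e j) W t) : ℝ) ^ x j
      ≤ ∏ j, (Nat.card (R j) : ℝ) ^ x j := by
  lift W to Finset V using W.toFinite
  induction W using Finset.induction_on with
  | empty => simp [paddedTuples_empty]
  | insert q W hq ih =>
    rw [coe_insert, sum_paddedTuples_insert (mod_cast hq)]
    exact (sum_le_sum fun t _ =>
      sum_prod_semijoinOn_insert_update_le hx (hcover q) (mod_cast hq) t).trans ih

end Elimination

theorem query_decomposition_general {VQ D : Type*} [Fintype VQ] [Fintype D]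
    (m : ℕ) (e : Fin m → VQ × VQ) (R : Fin m → Set (D × D))
    (x : Fin m → ℝ) (hx : ∀ j, 0 < x j)
    (hcover : ∀ q : VQ,
      1 ≤ ∑ j ∈ Finset.univ.filter (fun j : Fin m => (e j).1 = q ∨ (e j).2 = q), x j)
    (U : Set VQ) (hU : U.Nonempty) :
    (∑ᶠ t ∈ {t : U → D |
        ∀ j : Fin m, ((e j).1 ∈ U ∨ (e j).2 ∈ U) → (semijoin (R j) (e j) U t).Nonempty},
      ∏ j : Fin m, (Nat.card (semijoin (R j) (e j) U t) : ℝ) ^ (x j))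
      ≤ ∏ j : Fin m, (Nat.card (R j) : ℝ) ^ (x j) := by
  have hnonneg : ∀ t : U → D, 0 ≤ ∏ j, (Nat.card (semijoin (R j) (e j) U t) : ℝ) ^ x j :=
    fun t => prod_nonneg fun j _ => Real.rpow_nonneg (Nat.cast_nonneg _) _
  rw [finsum_mem_eq_toFinset_sum]
  refine (sum_le_univ_sum_of_nonneg hnonneg).trans ?_
  cases isEmpty_or_nonempty D with
  | inl hD =>
    have : IsEmpty (U → D) := ⟨fun t => hD.false (t ⟨_, hU.some_mem⟩)⟩
    simpa using prod_nonneg fun j _ => Real.rpow_nonneg (Nat.cast_nonneg (Nat.card (R j))) (x j)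
  | inr hD =>
    obtain ⟨d₀⟩ := hD
    rw [← sum_paddedTuples_domRestrict U d₀]
    simp only [semijoin_domRestrict]
    exact sum_paddedTuples_prod_semijoinOn_le hx hcover U d₀

/-- Query decomposition lemma: let `Q` be a graph with finite node set `VQ`
and edges `e 0, …, e (m-1)` (ordered pairs of nodes), let `D` be a finite
set, and let `R j ⊆ D × D` be a relation for each edge. Let `x` be a
fractional edge cover of `Q` and let `U` be a nonempty proper subset of
`VQ`. Let `L` be the set of partial tuples `t : U → D` such that
`R j ⋉ t` is nonempty for every edge `e j` having an endpoint in `U`. Then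
`∑_{t ∈ L} ∏_j |R j ⋉ t| ^ (x j) ≤ ∏_j |R j| ^ (x j)`. -/
theorem query_decomposition {VQ D : Type*} [Fintype VQ] [Fintype D]
    (m : ℕ) (e : Fin m → VQ × VQ) (R : Fin m → Set (D × D))
    (x : Fin m → ℝ) (hx : ∀ j, 0 < x j)
    (hcover : ∀ q : VQ,
      1 ≤ ∑ j ∈ Finset.univ.filter (fun j : Fin m => (e j).1 = q ∨ (e j).2 = q), x j)
    (U : Set VQ) (hU : U.Nonempty) (hUproper : U ≠ Set.univ) :
    (∑ᶠ t ∈ {t : U → D |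
        ∀ j : Fin m, ((e j).1 ∈ U ∨ (e j).2 ∈ U) → (semijoin (R j) (e j) U t).Nonempty},
      ∏ j : Fin m, (Nat.card (semijoin (R j) (e j) U t) : ℝ) ^ (x j))
      ≤ ∏ j : Fin m, (Nat.card (R j) : ℝ) ^ (x j) :=
  query_decomposition_general m e R x hx hcover U hU
end
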